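/- arXiv:2001.10286 — 5 statements merged into one kernel-verified Lean document; each statement's English description precedes it below -/
import Mathlib

section
/- Let G be a group with finite symmetric generating set X and P a positive cone of G. Then for every g ∈ P there exists a geodesic ray starting at g entirely contained in P; in particular every connected component of P in the Cayley graph Γ(G,X) is infinite. -/
open scoped Pointwise

/-- A positive cone of a group `G`: a subsemigroup `P` such that
`G = P ⊔ P⁻¹ ⊔ {1}` (disjoint union). -/
def IsPositiveCone {G : Type*} [Group G] (P : Set G) : Prop :=
  (∀ a ∈ P, ∀ b ∈ P, a * b ∈ P) ∧
  (∀ g : G, g ∈ P ∨ g⁻¹ ∈ P ∨ g = 1) ∧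
  (∀ g ∈ P, g⁻¹ ∉ P) ∧
  (1 : G) ∉ P

/-- Word length of `g` with respect to the generating set `X`. -/
noncomputable def wordLength {G : Type*} [Group G] (X : Set G) (g : G) : ℕ :=
  sInf {n | ∃ l : List G, (∀ x ∈ l, x ∈ X) ∧ l.length = n ∧ l.prod = g}

/-- Word metric on `G` with respect to `X`. -/
noncomputable def wordDist {G : Type*} [Group G] (X : Set G) (g h : G) : ℕ :=
  wordLength X (g⁻¹ * h)

/-- An `r`-path from `a` to `b` supported in `S` (consecutive word-metric
distances at most `r`). -/
def IsRPath {G : Type*} [Group G] (X : Set G) (r : ℕ) (S : Set G) (a b : G) : Prop :=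
  ∃ l : List G, l ≠ [] ∧ l.head? = some a ∧ l.getLast? = some b ∧
    (∀ x ∈ l, x ∈ S) ∧ l.Chain' (fun u v => wordDist X u v ≤ r)

/-- `S` is `r`-coarsely connected in the Cayley graph `Γ(G,X)`. -/
def CoarselyConnectedWith {G : Type*} [Group G] (X : Set G) (r : ℕ) (S : Set G) : Prop :=
  ∀ a ∈ S, ∀ b ∈ S, IsRPath X r S a b

/-- `X` is a finite symmetric generating set of `G`. -/
def IsGenSet {G : Type*} [Group G] (X : Set G) : Prop :=
  X.Finite ∧ (∀ x ∈ X, x⁻¹ ∈ X) ∧ Subgroup.closure X = ⊤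

/-- A positive cone on a subset `K` of `G` (used for subgroups such as kernels). -/
def IsPositiveConeOn {G : Type*} [Group G] (K P : Set G) : Prop :=
  P ⊆ K ∧ (∀ a ∈ P, ∀ b ∈ P, a * b ∈ P) ∧ (∀ g ∈ K, g ∈ P ∨ g⁻¹ ∈ P ∨ g = 1) ∧
  (∀ g ∈ P, g⁻¹ ∉ P) ∧ (1 : G) ∉ P

/-- The sub-semigroup generated by `S`: nonempty products of elements of `S`. -/
def SemigroupClosure {G : Type*} [Group G] (S : Set G) : Set G :=
  {g | ∃ l : List G, l ≠ [] ∧ (∀ x ∈ l, x ∈ S) ∧ l.prod = g}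

/-! Order `G` by `a < b ↔ b * a⁻¹ ∈ P`: a linear order invariant under right multiplication
in which `P = {h | 1 < h}`. Let `w n` be the largest element of the word ball of radius `n`
about `g`. For every `s` some generator `x` satisfies `s < s * x`, so `w n < w (n + 1)`; hence
`w (n + 1)` lies outside the ball of radius `n`, i.e. `d(g, w n) = n`. Writing
`w (n + 1) = u * x` with `u` in the smaller ball, right invariance gives
`w (n + 1) ≤ w n * x ≤ w (n + 1)`, so consecutive terms are at distance one and `w` is a
geodesic ray. Finally `g ≤ w n` keeps the ray inside `P`. -/

section WordMetric

variable {G : Type*} [Group G] {X : Set G}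

theorem wordLength_prod_le_length {l : List G} (hl : ∀ x ∈ l, x ∈ X) :
    wordLength X l.prod ≤ l.length :=
  Nat.sInf_le ⟨l, hl, rfl, rfl⟩

theorem exists_list_length_eq_wordLength (hsymm : ∀ x ∈ X, x⁻¹ ∈ X)
    (hgen : Subgroup.closure X = ⊤) (g : G) :
    ∃ l : List G, (∀ x ∈ l, x ∈ X) ∧ l.length = wordLength X g ∧ l.prod = g := by
  have hX : X ∪ X⁻¹ = X := Set.union_eq_left.mpr fun x hx => by simpa using hsymm _ hx
  have hg : g ∈ Submonoid.closure X := by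
    rw [← hX, ← Subgroup.closure_toSubmonoid, hgen]
    trivial
  obtain ⟨l, hl, hprod⟩ := Submonoid.exists_list_of_mem_closure hg
  exact Nat.sInf_mem (s := {n | ∃ l : List G, (∀ x ∈ l, x ∈ X) ∧ l.length = n ∧ l.prod = g})
    ⟨l.length, l, hl, rfl, hprod⟩

theorem wordLength_one : wordLength X (1 : G) = 0 :=
  Nat.le_zero.mp (wordLength_prod_le_length (l := []) (by simp))

theorem eq_one_of_wordLength_eq_zero (hsymm : ∀ x ∈ X, x⁻¹ ∈ X)
    (hgen : Subgroup.closure X = ⊤) {g : G} (h : wordLength X g = 0) : g = 1 := by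
  obtain ⟨l, -, hlen, rfl⟩ := exists_list_length_eq_wordLength hsymm hgen g
  rw [h, List.length_eq_zero_iff] at hlen
  simp [hlen]

theorem wordLength_inv_le (hsymm : ∀ x ∈ X, x⁻¹ ∈ X) (hgen : Subgroup.closure X = ⊤) (g : G) :
    wordLength X g⁻¹ ≤ wordLength X g := by
  obtain ⟨l, hl, hlen, rfl⟩ := exists_list_length_eq_wordLength hsymm hgen g
  rw [← hlen, List.prod_inv_reverse]
  refine (wordLength_prod_le_length fun x hx => ?_).trans (by simp)
  obtain ⟨y, hy, rfl⟩ := List.mem_map.mp (List.mem_reverse.mp hx)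
  exact hsymm y (hl y hy)

theorem wordLength_inv (hsymm : ∀ x ∈ X, x⁻¹ ∈ X) (hgen : Subgroup.closure X = ⊤) (g : G) :
    wordLength X g⁻¹ = wordLength X g :=
  (wordLength_inv_le hsymm hgen g).antisymm (by simpa using wordLength_inv_le hsymm hgen g⁻¹)

theorem wordLength_mul_le (hsymm : ∀ x ∈ X, x⁻¹ ∈ X) (hgen : Subgroup.closure X = ⊤) (a b : G) :
    wordLength X (a * b) ≤ wordLength X a + wordLength X b := by
  obtain ⟨la, hla, hlena, rfl⟩ := exists_list_length_eq_wordLength hsymm hgen a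
  obtain ⟨lb, hlb, hlenb, rfl⟩ := exists_list_length_eq_wordLength hsymm hgen b
  rw [← hlena, ← hlenb, ← List.length_append, ← List.prod_append]
  exact wordLength_prod_le_length fun x hx => (List.mem_append.mp hx).elim (hla x) (hlb x)

theorem wordLength_le_one_of_mem {x : G} (hx : x ∈ X) : wordLength X x ≤ 1 := by
  simpa using wordLength_prod_le_length (l := [x]) (by simpa)

theorem wordDist_self (a : G) : wordDist X a a = 0 := by
  simp [wordDist, wordLength_one]

theorem eq_of_wordDist_eq_zero (hsymm : ∀ x ∈ X, x⁻¹ ∈ X) (hgen : Subgroup.closure X = ⊤)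
    {a b : G} (h : wordDist X a b = 0) : a = b :=
  (inv_mul_eq_one.mp (eq_one_of_wordLength_eq_zero hsymm hgen h))

theorem wordDist_comm (hsymm : ∀ x ∈ X, x⁻¹ ∈ X) (hgen : Subgroup.closure X = ⊤) (a b : G) :
    wordDist X a b = wordDist X b a := by
  rw [wordDist, wordDist, ← wordLength_inv hsymm hgen, mul_inv_rev, inv_inv]

theorem wordDist_triangle (hsymm : ∀ x ∈ X, x⁻¹ ∈ X) (hgen : Subgroup.closure X = ⊤)
    (a b c : G) : wordDist X a c ≤ wordDist X a b + wordDist X b c := by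
  have h : a⁻¹ * c = (a⁻¹ * b) * (b⁻¹ * c) := by group
  rw [wordDist, h]
  exact wordLength_mul_le hsymm hgen _ _

theorem wordDist_mul_le_one {x : G} (hx : x ∈ X) (a : G) : wordDist X a (a * x) ≤ 1 := by
  rw [wordDist, inv_mul_cancel_left]
  exact wordLength_le_one_of_mem hx

theorem exists_mul_of_wordDist_eq_succ (hsymm : ∀ x ∈ X, x⁻¹ ∈ X)
    (hgen : Subgroup.closure X = ⊤) {g h : G} {n : ℕ} (hh : wordDist X g h = n + 1) :
    ∃ u, ∃ x ∈ X, wordDist X g u ≤ n ∧ h = u * x := by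
  rw [wordDist] at hh
  obtain ⟨l, hl, hlen, hprod⟩ := exists_list_length_eq_wordLength hsymm hgen (g⁻¹ * h)
  rcases l.eq_nil_or_concat with rfl | ⟨l, x, rfl⟩
  · simp only [List.length_nil] at hlen
    omega
  simp only [List.concat_eq_append, List.mem_append, List.length_append, List.prod_append,
    List.length_singleton, List.prod_singleton] at hl hlen hprod
  refine ⟨g * l.prod, x, hl x (by simp), ?_, ?_⟩
  · have := wordLength_prod_le_length fun y hy => hl y (Or.inl hy)
    rw [wordDist, inv_mul_cancel_left]
    omega
  · rw [mul_assoc, hprod, mul_inv_cancel_left]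

def wordBall (X : Set G) (g : G) (n : ℕ) : Set G := {h | wordDist X g h ≤ n}

theorem mem_wordBall_self (g : G) (n : ℕ) : g ∈ wordBall X g n := by
  simp [wordBall, wordDist_self]

theorem wordBall_zero (hsymm : ∀ x ∈ X, x⁻¹ ∈ X) (hgen : Subgroup.closure X = ⊤) (g : G) :
    wordBall X g 0 = {g} := by
  ext h
  refine ⟨fun hh => (eq_of_wordDist_eq_zero hsymm hgen (Nat.le_zero.mp hh)).symm, ?_⟩
  rintro rfl
  exact mem_wordBall_self h 0

theorem mul_mem_wordBall_succ (hsymm : ∀ x ∈ X, x⁻¹ ∈ X) (hgen : Subgroup.closure X = ⊤)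
    {g h x : G} {n : ℕ} (hh : h ∈ wordBall X g n) (hx : x ∈ X) : h * x ∈ wordBall X g (n + 1) :=
  (wordDist_triangle hsymm hgen _ _ _).trans (add_le_add hh (wordDist_mul_le_one hx _))

theorem finite_wordBall (hfin : X.Finite) (hsymm : ∀ x ∈ X, x⁻¹ ∈ X)
    (hgen : Subgroup.closure X = ⊤) (g : G) (n : ℕ) : (wordBall X g n).Finite := by
  have : Finite X := hfin
  refine ((List.finite_length_le X n).image fun l => g * (l.map (↑)).prod).subset ?_
  intro h hh
  obtain ⟨l, hl, hlen, hprod⟩ := exists_list_length_eq_wordLength hsymm hgen (g⁻¹ * h)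
  refine ⟨l.attach.map fun x => ⟨x.1, hl _ x.2⟩, ?_, ?_⟩
  · show _ ≤ n
    rw [List.length_map, List.length_attach, hlen]
    exact hh
  · simp [List.map_map, Function.comp_def, hprod]

end WordMetric

section Rays

variable {G : Type*} [Group G] {X : Set G}

def IsGeodesicRay (X : Set G) (v : ℕ → G) : Prop :=
  ∀ n m : ℕ, (wordDist X (v n) (v m) : ℤ) = |(n : ℤ) - (m : ℤ)|

theorem IsGeodesicRay.injective {v : ℕ → G} (hv : IsGeodesicRay X v) : Function.Injective v := by
  intro n m h
  have := hv n m
  rw [h, wordDist_self, Nat.cast_zero, eq_comm, abs_eq_zero, sub_eq_zero] at this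
  exact_mod_cast this

theorem IsGeodesicRay.wordDist_succ {v : ℕ → G} (hv : IsGeodesicRay X v) (n : ℕ) :
    wordDist X (v n) (v (n + 1)) = 1 := by
  have := hv n (n + 1)
  push_cast at this
  rw [sub_add_cancel_left, abs_neg, abs_one] at this
  exact_mod_cast this

theorem isGeodesicRay_of_wordDist_succ_le_one (hsymm : ∀ x ∈ X, x⁻¹ ∈ X)
    (hgen : Subgroup.closure X = ⊤) {v : ℕ → G} (hstep : ∀ n, wordDist X (v n) (v (n + 1)) ≤ 1)
    (hfar : ∀ n, n ≤ wordDist X (v 0) (v n)) : IsGeodesicRay X v := by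
  have hle : ∀ n k, wordDist X (v n) (v (n + k)) ≤ k := by
    intro n k
    induction k with
    | zero => simp [wordDist_self]
    | succ k ih =>
      have := wordDist_triangle hsymm hgen (v n) (v (n + k)) (v (n + k + 1))
      have := hstep (n + k)
      rw [← add_assoc]
      omega
  have heq : ∀ n k, wordDist X (v n) (v (n + k)) = k := by
    intro n k
    have h0n : wordDist X (v 0) (v n) ≤ n := by simpa using hle 0 n
    have := wordDist_triangle hsymm hgen (v 0) (v n) (v (n + k))
    have := hfar (n + k)
    have := hle n k
    omega
  intro n m
  rcases le_total n m with h | h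
  · obtain ⟨k, rfl⟩ := Nat.exists_eq_add_of_le h
    rw [heq, abs_sub_comm]
    push_cast
    simp
  · obtain ⟨k, rfl⟩ := Nat.exists_eq_add_of_le h
    rw [wordDist_comm hsymm hgen, heq]
    push_cast
    simp

theorem isRPath_of_wordDist_succ_le {r : ℕ} {S : Set G} {v : ℕ → G} (hS : ∀ n, v n ∈ S)
    (hstep : ∀ n, wordDist X (v n) (v (n + 1)) ≤ r) (n : ℕ) : IsRPath X r S (v 0) (v n) := by
  refine ⟨(List.range (n + 1)).map v, by simp, by simp [List.head?_range], ?_, by simp [hS], ?_⟩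
  · simp [List.getLast?_map, List.getLast?_range]
  · rw [List.Chain', List.isChain_map, List.isChain_range_succ]
    exact fun m _ => hstep m

end Rays

section RightOrdered

variable {G : Type*} [Group G] [LinearOrder G] {X : Set G}

theorem exists_isGreatest_wordBall (hfin : X.Finite) (hsymm : ∀ x ∈ X, x⁻¹ ∈ X)
    (hgen : Subgroup.closure X = ⊤) (g : G) (n : ℕ) : ∃ w, IsGreatest (wordBall X g n) w :=
  let ⟨w, hw, hmax⟩ := Set.exists_max_image _ id (finite_wordBall hfin hsymm hgen g n)
    ⟨g, mem_wordBall_self g n⟩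
  ⟨w, hw, hmax⟩

theorem eq_of_isGreatest_wordBall_zero (hsymm : ∀ x ∈ X, x⁻¹ ∈ X)
    (hgen : Subgroup.closure X = ⊤) {g w : G} (hw : IsGreatest (wordBall X g 0) w) : w = g := by
  simpa [wordBall_zero hsymm hgen] using hw.1

variable [MulRightMono G]

theorem exists_lt_mul_of_closure_eq_top [Nontrivial G] (hsymm : ∀ x ∈ X, x⁻¹ ∈ X)
    (hgen : Subgroup.closure X = ⊤) (s : G) : ∃ x ∈ X, s < s * x := by
  obtain ⟨y, hyX, hy⟩ : ∃ y ∈ X, y ≠ 1 := by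
    by_contra! h
    exact bot_ne_top ((Subgroup.closure_eq_bot_iff.mpr h).symm.trans hgen)
  rcases (mul_ne_left.mpr hy : s * y ≠ s).lt_or_gt with h | h
  · exact ⟨y⁻¹, hsymm y hyX, by simpa using mul_lt_mul_left h y⁻¹⟩
  · exact ⟨y, hyX, h⟩

variable {g : G} {w : ℕ → G}

theorem lt_succ_of_isGreatest_wordBall [Nontrivial G] (hsymm : ∀ x ∈ X, x⁻¹ ∈ X)
    (hgen : Subgroup.closure X = ⊤) (hw : ∀ n, IsGreatest (wordBall X g n) (w n)) (n : ℕ) :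
    w n < w (n + 1) := by
  obtain ⟨x, hx, hlt⟩ := exists_lt_mul_of_closure_eq_top hsymm hgen (w n)
  exact hlt.trans_le ((hw (n + 1)).2 (mul_mem_wordBall_succ hsymm hgen (hw n).1 hx))

theorem wordDist_eq_of_isGreatest_wordBall [Nontrivial G] (hsymm : ∀ x ∈ X, x⁻¹ ∈ X)
    (hgen : Subgroup.closure X = ⊤) (hw : ∀ n, IsGreatest (wordBall X g n) (w n)) (n : ℕ) :
    wordDist X g (w n) = n := by
  refine le_antisymm (hw n).1 ?_
  cases n with
  | zero => exact Nat.zero_le _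
  | succ n =>
    by_contra! h
    exact (lt_succ_of_isGreatest_wordBall hsymm hgen hw n).not_ge ((hw n).2 (Nat.le_of_lt_succ h))

theorem exists_succ_eq_mul_of_isGreatest_wordBall [Nontrivial G] (hsymm : ∀ x ∈ X, x⁻¹ ∈ X)
    (hgen : Subgroup.closure X = ⊤) (hw : ∀ n, IsGreatest (wordBall X g n) (w n)) (n : ℕ) :
    ∃ x ∈ X, w (n + 1) = w n * x := by
  obtain ⟨u, x, hx, hu, hux⟩ := exists_mul_of_wordDist_eq_succ hsymm hgen
    (wordDist_eq_of_isGreatest_wordBall hsymm hgen hw (n + 1))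
  refine ⟨x, hx, le_antisymm ?_ ((hw (n + 1)).2 (mul_mem_wordBall_succ hsymm hgen (hw n).1 hx))⟩
  exact hux ▸ mul_le_mul_left ((hw n).2 hu) x

theorem isGeodesicRay_of_isGreatest_wordBall [Nontrivial G] (hsymm : ∀ x ∈ X, x⁻¹ ∈ X)
    (hgen : Subgroup.closure X = ⊤) (hw : ∀ n, IsGreatest (wordBall X g n) (w n)) :
    IsGeodesicRay X w := by
  refine isGeodesicRay_of_wordDist_succ_le_one hsymm hgen (fun n => ?_) (fun n => ?_)
  · obtain ⟨x, hx, hwx⟩ := exists_succ_eq_mul_of_isGreatest_wordBall hsymm hgen hw n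
    exact hwx ▸ wordDist_mul_le_one hx _
  · rw [eq_of_isGreatest_wordBall_zero hsymm hgen (hw 0),
      wordDist_eq_of_isGreatest_wordBall hsymm hgen hw n]

end RightOrdered

namespace IsPositiveCone

variable {G : Type*} [Group G] {P : Set G}

noncomputable abbrev rightOrder (hP : IsPositiveCone P) : LinearOrder G where
  le a b := a = b ∨ b * a⁻¹ ∈ P
  le_refl a := Or.inl rfl
  le_trans a b c := by
    rintro (rfl | hab) (rfl | hbc)
    exacts [Or.inl rfl, Or.inr hbc, Or.inr hab,
      Or.inr (by simpa [mul_assoc] using hP.1 _ hbc _ hab)]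
  le_antisymm a b := by
    rintro (rfl | hab) (h | hba)
    exacts [rfl, rfl, h.symm, absurd (by simpa using hba) (hP.2.2.1 _ hab)]
  le_total a b := by
    rcases hP.2.1 (b * a⁻¹) with h | h | h
    · exact Or.inl (Or.inr h)
    · exact Or.inr (Or.inr (by simpa using h))
    · exact Or.inl (Or.inl (mul_inv_eq_one.mp h).symm)
  toDecidableLE := Classical.decRel _

theorem mulRightMono_rightOrder (hP : IsPositiveCone P) :
    letI := hP.rightOrder
    MulRightMono G :=
  ⟨fun c a b => Or.imp (congrArg (· * c)) fun h => by simpa [mul_assoc] using h⟩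

theorem mem_of_rightOrder_le (hP : IsPositiveCone P) {a b : G} (ha : a ∈ P)
    (hab : hP.rightOrder.le a b) : b ∈ P :=
  hab.elim (· ▸ ha) fun h => by simpa using hP.1 _ h _ ha

end IsPositiveCone

/-- every element of a positive cone is the start of a geodesic ray
contained in the cone; in particular the connected component of any `g ∈ P` in
the Cayley graph is infinite. -/
theorem stmt_5 {G : Type*} [Group G] (X : Set G) (hX : IsGenSet X)
    (P : Set G) (hP : IsPositiveCone P) :
    ∀ g ∈ P, (∃ v : ℕ → G, v 0 = g ∧ (∀ n, v n ∈ P) ∧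
      (∀ n m : ℕ, (wordDist X (v n) (v m) : ℤ) = |(n : ℤ) - (m : ℤ)|)) ∧
      {b : G | IsRPath X 1 P g b}.Infinite := by
  obtain ⟨hfin, hsymm, hgen⟩ := hX
  intro g hg
  let _ : LinearOrder G := hP.rightOrder
  have _ := hP.mulRightMono_rightOrder
  have _ : Nontrivial G := ⟨g, 1, fun h => hP.2.2.2 (h ▸ hg)⟩
  choose w hw using exists_isGreatest_wordBall hfin hsymm hgen g
  have hw0 : w 0 = g := eq_of_isGreatest_wordBall_zero hsymm hgen (hw 0)
  have hwP : ∀ n, w n ∈ P := fun n => hP.mem_of_rightOrder_le hg ((hw n).2 (mem_wordBall_self g n))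
  have hray := isGeodesicRay_of_isGreatest_wordBall hsymm hgen hw
  refine ⟨⟨w, hw0, hwP, hray⟩, Set.infinite_of_injective_forall_mem hray.injective fun n => ?_⟩
  exact hw0 ▸ isRPath_of_wordDist_succ_le hwP (fun n => (hray.wordDist_succ n).le) n
end

section
/- Every positive cone of ℤⁿ is a coarsely connected subset of the Cayley graph of ℤⁿ with respect to the standard generators; that is, finitely generated free abelian groups are Prieto. -/
/-- ℓ¹ distance on `ℤⁿ` (the word metric for the standard generators). -/
def l1dist {n : ℕ} (x y : Fin n → ℤ) : ℕ := ∑ i, (x i - y i).natAbs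

/-- A positive cone of the additive group `ℤⁿ`. -/
def IsPositiveConeAdd {n : ℕ} (P : Set (Fin n → ℤ)) : Prop :=
  (∀ a ∈ P, ∀ b ∈ P, a + b ∈ P) ∧ (∀ g : Fin n → ℤ, g ∈ P ∨ -g ∈ P ∨ g = 0) ∧
  (∀ g ∈ P, -g ∉ P) ∧ (0 : Fin n → ℤ) ∉ P

/-!
Since `P` is closed under addition, adding an element of `P` of length one to a point of `P`
is a step of length one inside `P`; hence `a` is joined to `a + p` inside `P` whenever `p` is a
sum of such unit steps. For every coordinate `i`, either `eᵢ` or `-eᵢ` lies in `P`, so these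
sums generate `ℤⁿ` as a group and `b - a = p - q` for two such sums `p`, `q`. Then `a` and `b`
are both joined to `a + p = b + q`, with steps of length one.
-/

section L1Dist

variable {n : ℕ}

theorem l1dist_comm (x y : Fin n → ℤ) : l1dist x y = l1dist y x := by
  simp only [l1dist, ← Int.natAbs_neg (x _ - y _), neg_sub]

theorem l1dist_self_add (x v : Fin n → ℤ) : l1dist x (x + v) = l1dist 0 v := by
  simp [l1dist]

theorem l1dist_zero_single (i : Fin n) (c : ℤ) : l1dist 0 (Pi.single i c) = c.natAbs := by
  simp [l1dist, Pi.single_apply, apply_ite Int.natAbs]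

end L1Dist

theorem AddSubgroup.exists_sub_eq_of_mem_closure {G : Type*} [AddCommGroup G] {S : Set G}
    {g : G} (hg : g ∈ AddSubgroup.closure S) :
    ∃ p ∈ AddSubmonoid.closure S, ∃ q ∈ AddSubmonoid.closure S, p - q = g := by
  rw [← AddSubgroup.mem_toAddSubmonoid, AddSubgroup.closure_toAddSubmonoid,
    AddSubmonoid.closure_union, AddSubmonoid.mem_sup] at hg
  obtain ⟨p, hp, q, hq, rfl⟩ := hg
  rw [AddSubmonoid.closure_neg, AddSubmonoid.mem_neg] at hq
  exact ⟨p, hp, -q, hq, sub_neg_eq_add p q⟩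

def CloseIn {n : ℕ} (P : Set (Fin n → ℤ)) (r : ℕ) (u v : Fin n → ℤ) : Prop :=
  u ∈ P ∧ v ∈ P ∧ l1dist u v ≤ r

namespace CloseIn

variable {n : ℕ} {P : Set (Fin n → ℤ)} {r : ℕ} {a b : Fin n → ℤ}

instance : Std.Symm (CloseIn P r) where
  symm _ _ h := ⟨h.2.1, h.1, l1dist_comm _ _ ▸ h.2.2⟩

theorem mem_of_reflTransGen (h : Relation.ReflTransGen (CloseIn P r) a b) (ha : a ∈ P) :
    b ∈ P := by
  rcases h.cases_tail with rfl | ⟨c, -, hcb⟩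
  exacts [ha, hcb.2.1]

theorem exists_isChain_of_reflTransGen (h : Relation.ReflTransGen (CloseIn P r) a b)
    (ha : a ∈ P) :
    ∃ l : List (Fin n → ℤ), l ≠ [] ∧ l.head? = some a ∧ l.getLast? = some b ∧
      (∀ x ∈ l, x ∈ P) ∧ l.IsChain (fun u v => l1dist u v ≤ r) := by
  obtain ⟨l, hl, hchain, rfl, rfl⟩ := List.exists_isChain_ne_nil_of_relationReflTransGen h
  refine ⟨l, hl, List.head?_eq_some_head hl, List.getLast?_eq_some_getLast hl,
    hchain.induction _ _ (fun _ _ hxy _ => hxy.2.1) (fun _ => ha), hchain.imp fun _ _ h => h.2.2⟩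

theorem reflTransGen_add_of_mem_closure (hadd : ∀ a ∈ P, ∀ b ∈ P, a + b ∈ P) {v : Fin n → ℤ}
    (hv : v ∈ AddSubmonoid.closure {s | s ∈ P ∧ l1dist 0 s ≤ r}) :
    ∀ a ∈ P, Relation.ReflTransGen (CloseIn P r) a (a + v) := by
  induction hv using AddSubmonoid.closure_induction with
  | mem s hs =>
    exact fun a ha => .single ⟨ha, hadd a ha s hs.1, (l1dist_self_add a s).trans_le hs.2⟩
  | zero => simpa using fun _ _ => .refl
  | add x y _ _ hx hy =>
    intro a ha
    have hax := hx a ha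
    rw [← add_assoc]
    exact hax.trans (hy (a + x) (mem_of_reflTransGen hax ha))

end CloseIn

theorem closure_unit_steps_eq_top {n : ℕ} {P : Set (Fin n → ℤ)}
    (htri : ∀ g : Fin n → ℤ, g ∈ P ∨ -g ∈ P ∨ g = 0) :
    AddSubgroup.closure {s | s ∈ P ∧ l1dist 0 s ≤ 1} = ⊤ := by
  set H := AddSubgroup.closure {s | s ∈ P ∧ l1dist 0 s ≤ 1}
  have hsingle : ∀ i, Pi.single i 1 ∈ H := by
    intro i
    rcases htri (Pi.single i 1) with h | h | h
    · exact AddSubgroup.subset_closure ⟨h, by simp [l1dist_zero_single]⟩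
    · refine neg_mem_iff.mp (AddSubgroup.subset_closure ⟨h, ?_⟩)
      simp [← Pi.single_neg, l1dist_zero_single]
    · simpa using congrFun h i
  refine eq_top_iff.mpr fun v _ => ?_
  rw [← Finset.univ_sum_single v]
  refine AddSubgroup.sum_mem _ fun i _ => ?_
  have h := AddSubgroup.zsmul_mem _ (hsingle i) (v i)
  rwa [← Pi.single_smul', smul_eq_mul, mul_one] at h

/-- every positive cone of `ℤⁿ` is coarsely connected with respect
to the ℓ¹ word metric coming from the standard generators (ℤⁿ is Prieto). -/
theorem stmt_9 {n : ℕ} (P : Set (Fin n → ℤ)) (hP : IsPositiveConeAdd P) :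
    ∃ r : ℕ, 1 ≤ r ∧ ∀ a ∈ P, ∀ b ∈ P,
      ∃ l : List (Fin n → ℤ), l ≠ [] ∧ l.head? = some a ∧ l.getLast? = some b ∧
        (∀ x ∈ l, x ∈ P) ∧ l.Chain' (fun u v => l1dist u v ≤ r) := by
  obtain ⟨hadd, htri, -, -⟩ := hP
  refine ⟨1, le_rfl, fun a ha b hb => ?_⟩
  have hba : b - a ∈ AddSubgroup.closure {s | s ∈ P ∧ l1dist 0 s ≤ 1} := by
    rw [closure_unit_steps_eq_top htri]
    exact AddSubgroup.mem_top _
  obtain ⟨p, hp, q, hq, hpq⟩ := AddSubgroup.exists_sub_eq_of_mem_closure hba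
  have hmeet : a + p = b + q := by
    linear_combination hpq
  have hab : Relation.ReflTransGen (CloseIn P 1) a b :=
    (CloseIn.reflTransGen_add_of_mem_closure hadd hp a ha).trans
      (hmeet ▸ symm (CloseIn.reflTransGen_add_of_mem_closure hadd hq b hb))
  exact CloseIn.exists_isChain_of_reflTransGen hab ha
end

section
/- In any left-invariant total order on the iterated torus knot group T_{n₁,…,n_k} = ⟨a₁,…,a_k | a₁^{n₁} = a₂^{n₂} = ⋯ = a_k^{n_k}⟩ (with all n_i ≥ 2), the central element z = a₁^{n₁} is cofinal: for every g in the group there exist integers m₁, m₂ with z^{m₁} ≺ g ≺ z^{m₂}. -/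
/-!
The power `z = a₁ ^ n₁` is central, and `z ≠ 1` since `aᵢ ↦ 1 / nᵢ` extends to a homomorphism
to `ℚ` sending `z` to `1`. For a central `c ≠ 1` of a left-ordered group, the elements lying
between two powers of `c` form a subgroup: centrality lets such bounds be multiplied and inverted.
This subgroup contains every `a` with `a ^ n = c` and `n ≥ 2`: if `1 < c ≤ a`, then
`c < c ^ n ≤ a ^ n = c`. As the `aᵢ` generate the group, the subgroup is everything.
-/

theorem Commute.pow_le_pow_left {M : Type*} [Monoid M] [Preorder M] [MulLeftMono M]
    {a b : M} (hab : Commute a b) (h : a ≤ b) : ∀ m : ℕ, a ^ m ≤ b ^ m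
  | 0 => by simp
  | m + 1 =>
    calc a ^ (m + 1) = a * a ^ m := pow_succ' a m
      _ ≤ a * b ^ m := mul_le_mul_right (hab.pow_le_pow_left h m) a
      _ = b ^ m * a := (hab.pow_right m).eq
      _ ≤ b ^ m * b := mul_le_mul_right h _
      _ = b ^ (m + 1) := (pow_succ b m).symm

section LeftOrderedGroup

variable {G : Type*} [Group G] [LinearOrder G] [MulLeftStrictMono G]

theorem Commute.inv_lt_comm {a b : G} (hab : Commute a b) : a⁻¹ < b ↔ b⁻¹ < a := by
  rw [inv_lt_iff_one_lt_mul', inv_lt_iff_one_lt_mul', hab.eq]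

theorem Commute.lt_of_pow_le {c a : G} (hca : Commute c a) (hc : 1 < c) {n : ℕ} (hn : 2 ≤ n)
    (h : a ^ n ≤ c) : a < c := by
  have := mulLeftMono_of_mulLeftStrictMono G
  by_contra! hle
  have hcn : c ^ 1 < c ^ n := pow_lt_pow_right' hc hn
  rw [pow_one] at hcn
  exact (hcn.trans_le ((hca.pow_le_pow_left hle n).trans h)).false

theorem Commute.inv_lt_and_lt_of_pow_eq {c a : G} (hca : Commute c a) (hc : 1 < c) {n : ℕ}
    (hn : 2 ≤ n) (h : a ^ n = c ∨ a ^ n = c⁻¹) : c⁻¹ < a ∧ a < c := by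
  have hinv : c⁻¹ ≤ c := ((inv_lt_one'.2 hc).trans hc).le
  have hpow : a ^ n ≤ c := by rcases h with h | h <;> rw [h]; exact hinv
  have hpow_inv : a⁻¹ ^ n ≤ c := by
    rcases h with h | h <;> rw [inv_pow, h]
    exacts [hinv, (inv_inv c).le]
  exact ⟨hca.symm.inv_lt_comm.1 (hca.inv_right.lt_of_pow_le hc hn hpow_inv),
    hca.lt_of_pow_le hc hn hpow⟩

variable (c : G)

def boundedByZPowers (hc : c ∈ Subgroup.center G) (hc1 : c ≠ 1) : Subgroup G where
  carrier := {g | ∃ m₁ m₂ : ℤ, c ^ m₁ < g ∧ g < c ^ m₂}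
  one_mem' := by
    rcases hc1.lt_or_gt with hlt | hgt
    · exact ⟨1, -1, by simpa using hlt, by simpa using one_lt_inv'.2 hlt⟩
    · exact ⟨-1, 1, by simpa using inv_lt_one'.2 hgt, by simpa using hgt⟩
  mul_mem' := by
    rintro g h ⟨k₁, k₂, hg₁, hg₂⟩ ⟨l₁, l₂, hh₁, hh₂⟩
    have hcomm (m : ℤ) : g * c ^ m = c ^ m * g := ((Subgroup.zpow_mem _ hc m).comm g).symm.eq
    refine ⟨l₁ + k₁, l₂ + k₂, ?_, ?_⟩
    · calc c ^ (l₁ + k₁) = c ^ l₁ * c ^ k₁ := zpow_add c l₁ k₁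
        _ < c ^ l₁ * g := mul_lt_mul_right hg₁ _
        _ = g * c ^ l₁ := (hcomm l₁).symm
        _ < g * h := mul_lt_mul_right hh₁ _
    · calc g * h < g * c ^ l₂ := mul_lt_mul_right hh₂ _
        _ = c ^ l₂ * g := hcomm l₂
        _ < c ^ l₂ * c ^ k₂ := mul_lt_mul_right hg₂ _
        _ = c ^ (l₂ + k₂) := (zpow_add c l₂ k₂).symm
  inv_mem' := by
    rintro g ⟨m₁, m₂, hg₁, hg₂⟩
    have hcomm (m : ℤ) : Commute (c ^ m) g := (Subgroup.zpow_mem _ hc m).comm g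
    refine ⟨-m₂, -m₁, ?_, ?_⟩
    · rw [zpow_neg]
      exact (hcomm m₂).inv_right.inv_lt_comm.2 (by rwa [inv_inv])
    · rw [zpow_neg]
      exact (hcomm m₁).symm.inv_right.inv_lt_comm.2 (by rwa [inv_inv])

variable {c}

theorem mem_boundedByZPowers_of_pow_eq (hc : c ∈ Subgroup.center G) (hc1 : c ≠ 1) {a : G}
    {n : ℕ} (hn : 2 ≤ n) (ha : a ^ n = c) : a ∈ boundedByZPowers c hc hc1 := by
  have hca : Commute c a := (Subgroup.mem_center_iff.1 hc a).symm
  rcases hc1.lt_or_gt with hlt | hgt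
  · obtain ⟨hlow, hup⟩ := hca.inv_left.inv_lt_and_lt_of_pow_eq (one_lt_inv'.2 hlt) hn
      (Or.inr (by rw [ha, inv_inv]))
    exact ⟨1, -1, by rwa [zpow_one, ← inv_inv c], by rwa [zpow_neg_one]⟩
  · obtain ⟨hlow, hup⟩ := hca.inv_lt_and_lt_of_pow_eq hgt hn (Or.inl ha)
    exact ⟨-1, 1, by rwa [zpow_neg_one], by rwa [zpow_one]⟩

theorem exists_zpow_lt_and_lt_zpow (hc : c ∈ Subgroup.center G) (hc1 : c ≠ 1) {s : Set G}
    (hs : Subgroup.closure s = ⊤) (hpow : ∀ a ∈ s, ∃ n, 2 ≤ n ∧ a ^ n = c) (g : G) :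
    ∃ m₁ m₂ : ℤ, c ^ m₁ < g ∧ g < c ^ m₂ := by
  have hle : Subgroup.closure s ≤ boundedByZPowers c hc hc1 :=
    (Subgroup.closure_le _).2 fun a ha ↦
      let ⟨_, hn, ha⟩ := hpow a ha
      mem_boundedByZPowers_of_pow_eq hc hc1 hn ha
  exact hle (hs ▸ Subgroup.mem_top g)

end LeftOrderedGroup

section TorusKnotGroup

variable {ι : Type*} (n : ι → ℕ)

def torusKnotRels : Set (FreeGroup ι) :=
  {w | ∃ i j, w = FreeGroup.of i ^ n i * (FreeGroup.of j ^ n j)⁻¹}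

theorem torusKnotRels.of_pow_eq (i j : ι) :
    (PresentedGroup.of i : PresentedGroup (torusKnotRels n)) ^ n i = PresentedGroup.of j ^ n j := by
  have := PresentedGroup.mk_eq_mk_of_mul_inv_mem (rels := torusKnotRels n)
    (x := FreeGroup.of i ^ n i) (y := FreeGroup.of j ^ n j) ⟨i, j, rfl⟩
  rwa [map_pow, map_pow] at this

theorem torusKnotRels.of_pow_mem_center (i : ι) :
    (PresentedGroup.of i : PresentedGroup (torusKnotRels n)) ^ n i ∈ Subgroup.center _ := by
  refine Subgroup.mem_center_iff.2 fun g ↦ Subgroup.mem_centralizer_singleton_iff.1 ?_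
  refine PresentedGroup.generated_by _ _ (fun j ↦ ?_) g
  rw [Subgroup.mem_centralizer_singleton_iff, torusKnotRels.of_pow_eq n i j]
  exact (Commute.self_pow _ _).eq

theorem torusKnotRels.of_pow_ne_one (hn : ∀ i, n i ≠ 0) (i : ι) :
    (PresentedGroup.of i : PresentedGroup (torusKnotRels n)) ^ n i ≠ 1 := by
  let f : ι → Multiplicative ℚ := fun i ↦ Multiplicative.ofAdd (n i : ℚ)⁻¹
  have hf (i : ι) : f i ^ n i = Multiplicative.ofAdd 1 := by
    rw [← ofAdd_nsmul, nsmul_eq_mul, mul_inv_cancel₀ (Nat.cast_ne_zero.2 (hn i))]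
  have hrels : ∀ w ∈ torusKnotRels n, FreeGroup.lift f w = 1 := by
    rintro _ ⟨i, j, rfl⟩
    simp [hf]
  intro h
  have := congrArg (PresentedGroup.toGroup hrels) h
  simp [hf] at this

end TorusKnotGroup

/-- in any left-invariant total order on the iterated torus knot
group `T_{n₁,…,n_k} = ⟨a₁,…,a_k ∣ a₁^{n₁} = ⋯ = a_k^{n_k}⟩` (all `n_i ≥ 2`),
the central element `z = a₁^{n₁}` is cofinal. -/
theorem stmt_11 (k : ℕ) (hk : 0 < k) (n : Fin k → ℕ) (hn : ∀ i, 2 ≤ n i)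
    (rels : Set (FreeGroup (Fin k)))
    (hrels : rels = {w : FreeGroup (Fin k) | ∃ i j : Fin k,
      w = FreeGroup.of i ^ n i * (FreeGroup.of j ^ n j)⁻¹})
    (r : PresentedGroup rels → PresentedGroup rels → Prop)
    (hirr : ∀ a, ¬ r a a)
    (htrans : ∀ a b c, r a b → r b c → r a c)
    (htri : ∀ a b, r a b ∨ a = b ∨ r b a)
    (hleft : ∀ g a b, r a b → r (g * a) (g * b)) :
    ∀ g : PresentedGroup rels, ∃ m₁ m₂ : ℤ,
      r (((PresentedGroup.of (⟨0, hk⟩ : Fin k)) ^ n ⟨0, hk⟩) ^ m₁) g ∧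
      r g (((PresentedGroup.of (⟨0, hk⟩ : Fin k)) ^ n ⟨0, hk⟩) ^ m₂) := by
  change rels = torusKnotRels n at hrels
  subst hrels
  have : IsStrictTotalOrder _ r :=
    { irrefl := hirr, trans := htrans
      trichotomous a b hab hba := ((htri a b).resolve_left hab).resolve_right hba }
  classical
  let := linearOrderOfSTO r
  have : MulLeftStrictMono (PresentedGroup (torusKnotRels n)) := ⟨fun g _ _ h ↦ hleft g _ _ h⟩
  exact exists_zpow_lt_and_lt_zpow (torusKnotRels.of_pow_mem_center n _)
    (torusKnotRels.of_pow_ne_one n (fun i ↦ (two_pos.trans_le (hn i)).ne') _)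
    (PresentedGroup.closure_range_of _)
    (by rintro _ ⟨i, rfl⟩; exact ⟨n i, hn i, torusKnotRels.of_pow_eq n i _⟩)
end

section
/- Let G = A ∗_C B be an amalgamated free product in which C is malnormal in A (gCg⁻¹ ∩ C = {1} for all g ∈ A \ C), and let T be the Bass–Serre tree. Then the action of G on T is 2-acylindrical: the pointwise stabilizer of any path of length at least 3 in T (equivalently, any subset of diameter ≥ 3) is trivial. -/
/-!
A path of length 3 in the Bass–Serre tree passes through a vertex `gA` together with two distinct
neighbours `gB ≠ g'B`, where `a = g⁻¹g' ∈ A \ B`. If `k` fixes all three, then `c = g⁻¹kg` lies in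
`C = A ∩ B` and so does its conjugate `a⁻¹ca = g'⁻¹kg'`; malnormality of `C` in `A` forces `c = 1`.
-/

section BassSerre

open QuotientGroup

variable {G : Type*} [Group G]

def IsMalnormalIn (C A : Subgroup G) : Prop :=
  ∀ a : G, a ∈ A → a ∉ C → ∀ c : G, c ∈ C → a * c * a⁻¹ ∈ C → c = 1

theorem IsMalnormalIn.eq_one_of_conj_mem {A B : Subgroup G} (hmal : IsMalnormalIn (A ⊓ B) A)
    {a c : G} (haA : a ∈ A) (haB : a ∉ B) (hc : c ∈ A ⊓ B) (hac : a⁻¹ * c * a ∈ B) : c = 1 := by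
  refine hmal a⁻¹ (A.inv_mem haA) (fun h => haB (by simpa using h.2)) c hc ⟨?_, ?_⟩ <;>
    rw [inv_inv]
  · exact A.mul_mem (A.mul_mem (A.inv_mem haA) hc.1) haA
  · exact hac

theorem smul_mk_eq_self_iff {H : Subgroup G} {k g : G} :
    k • (mk g : G ⧸ H) = mk g ↔ g⁻¹ * k * g ∈ H := by
  change (mk (k * g) : G ⧸ H) = mk g ↔ _
  rw [QuotientGroup.eq, ← H.inv_mem_iff]
  simp [mul_assoc]

def BassSerreAdj (A B : Subgroup G) (x y : (G ⧸ A) ⊕ (G ⧸ B)) : Prop :=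
  ∃ g : G, (x = Sum.inl (mk g) ∧ y = Sum.inr (mk g)) ∨ (y = Sum.inl (mk g) ∧ x = Sum.inr (mk g))

namespace BassSerreAdj

variable {A B : Subgroup G}

theorem symm {x y : (G ⧸ A) ⊕ (G ⧸ B)} (h : BassSerreAdj A B x y) : BassSerreAdj A B y x := by
  obtain ⟨g, h⟩ := h
  exact ⟨g, h.symm⟩

theorem exists_of_inl {x : G ⧸ A} {w : (G ⧸ A) ⊕ (G ⧸ B)} (h : BassSerreAdj A B (.inl x) w) :
    ∃ g : G, x = mk g ∧ w = .inr (mk g) := by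
  obtain ⟨g, ⟨hx, hw⟩ | ⟨-, hx⟩⟩ := h
  · exact ⟨g, Sum.inl.inj hx, hw⟩
  · cases hx

theorem exists_inl_of_inr {y : G ⧸ B} {w : (G ⧸ A) ⊕ (G ⧸ B)} (h : BassSerreAdj A B (.inr y) w) :
    ∃ x : G ⧸ A, w = .inl x := by
  obtain ⟨g, ⟨hy, -⟩ | ⟨hw, -⟩⟩ := h
  · cases hy
  · exact ⟨_, hw⟩

end BassSerreAdj

theorem eq_one_of_fixes_star {A B : Subgroup G} (hmal : IsMalnormalIn (A ⊓ B) A)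
    {x : G ⧸ A} {y z : G ⧸ B} (hyz : y ≠ z)
    (hy : BassSerreAdj A B (.inl x) (.inr y)) (hz : BassSerreAdj A B (.inl x) (.inr z))
    {k : G} (hkx : k • x = x) (hky : k • y = y) (hkz : k • z = z) : k = 1 := by
  obtain ⟨g, rfl, hgy⟩ := hy.exists_of_inl
  obtain ⟨g', hgg', hgz⟩ := hz.exists_of_inl
  cases Sum.inr.inj hgy
  cases Sum.inr.inj hgz
  have hc : g⁻¹ * k * g = 1 := by
    refine hmal.eq_one_of_conj_mem (QuotientGroup.eq.mp hgg') (fun h => hyz (QuotientGroup.eq.mpr h))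
      ⟨smul_mk_eq_self_iff.mp hkx, smul_mk_eq_self_iff.mp hky⟩ ?_
    convert smul_mk_eq_self_iff.mp hkz using 1
    group
  calc k = g * (g⁻¹ * k * g) * g⁻¹ := by group
    _ = 1 := by rw [hc]; group

theorem exists_inl_with_two_neighbours {A B : Subgroup G} {v : Fin 4 → (G ⧸ A) ⊕ (G ⧸ B)}
    (hpath : ∀ i : Fin 3, BassSerreAdj A B (v i.castSucc) (v i.succ)) (hinj : Function.Injective v) :
    ∃ (x : G ⧸ A) (y z : G ⧸ B), y ≠ z ∧ BassSerreAdj A B (.inl x) (.inr y) ∧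
      BassSerreAdj A B (.inl x) (.inr z) ∧ {.inl x, .inr y, .inr z} ⊆ Set.range v := by
  have h01 : BassSerreAdj A B (v 0) (v 1) := hpath 0
  have h12 : BassSerreAdj A B (v 1) (v 2) := hpath 1
  have h23 : BassSerreAdj A B (v 2) (v 3) := hpath 2
  -- Vertex types alternate along the path, so `v 1` or `v 2` is an `A`-vertex.
  rcases hv1 : v 1 with x | y
  · rw [hv1] at h01 h12
    obtain ⟨g, -, hv0⟩ := h01.symm.exists_of_inl
    obtain ⟨g', -, hv2⟩ := h12.exists_of_inl
    rw [hv0] at h01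
    rw [hv2] at h12
    refine ⟨x, mk g, mk g', fun h => hinj.ne (by decide : (0 : Fin 4) ≠ 2) ?_, h01.symm, h12, ?_⟩
    · rw [hv0, hv2, h]
    · simp only [Set.insert_subset_iff, Set.singleton_subset_iff]
      exact ⟨⟨1, hv1⟩, ⟨0, hv0⟩, ⟨2, hv2⟩⟩
  · rw [hv1] at h12
    obtain ⟨x, hv2⟩ := h12.exists_inl_of_inr
    rw [hv2] at h12 h23
    obtain ⟨g, -, hv3⟩ := h23.exists_of_inl
    rw [hv3] at h23
    refine ⟨x, y, mk g, fun h => hinj.ne (by decide : (1 : Fin 4) ≠ 3) ?_, h12.symm, h23, ?_⟩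
    · rw [hv1, hv3, h]
    · simp only [Set.insert_subset_iff, Set.singleton_subset_iff]
      exact ⟨⟨2, hv2⟩, ⟨1, hv1⟩, ⟨3, hv3⟩⟩

end BassSerre

theorem stmt_17_general {G : Type*} [Group G] (A B : Subgroup G)
    (hmal : ∀ a : G, a ∈ A → a ∉ A ⊓ B →
      ∀ c : G, c ∈ A ⊓ B → a * c * a⁻¹ ∈ A ⊓ B → c = 1)
    (T : SimpleGraph ((G ⧸ A) ⊕ (G ⧸ B)))
    (hadj : ∀ x y : (G ⧸ A) ⊕ (G ⧸ B), T.Adj x y ↔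
      ∃ g : G, (x = Sum.inl (QuotientGroup.mk g) ∧ y = Sum.inr (QuotientGroup.mk g)) ∨
               (y = Sum.inl (QuotientGroup.mk g) ∧ x = Sum.inr (QuotientGroup.mk g)))
    (v : Fin 4 → (G ⧸ A) ⊕ (G ⧸ B))
    (hpath : ∀ i : Fin 3, T.Adj (v i.castSucc) (v i.succ))
    (hinj : Function.Injective v)
    (k : G)
    (hfix : ∀ i : Fin 4,
      Sum.map (fun x : G ⧸ A => k • x) (fun y : G ⧸ B => k • y) (v i) = v i) :
    k = 1 := by
  obtain ⟨x, y, z, hyz, hy, hz, hrange⟩ :=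
    exists_inl_with_two_neighbours (fun i => (hadj _ _).mp (hpath i)) hinj
  have hfixed {w} (hw : w ∈ Set.range v) : Sum.map (k • ·) (k • ·) w = w := by
    obtain ⟨i, rfl⟩ := hw
    exact hfix i
  refine eq_one_of_fixes_star hmal hyz hy hz ?_ ?_ ?_
  · simpa using hfixed (w := .inl x) (hrange (by simp))
  · simpa using hfixed (w := .inr y) (hrange (by simp))
  · simpa using hfixed (w := .inr z) (hrange (by simp))

/-- if `C = A ⊓ B` is malnormal in `A`, then the action of `G` on
the Bass–Serre tree of `A ∗_C B` is 2-acylindrical: the pointwise stabilizer of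
any reduced path of length 3 (hence of any set of diameter ≥ 3) is trivial. -/
theorem stmt_17 {G : Type*} [Group G] (A B : Subgroup G)
    (hmal : ∀ a : G, a ∈ A → a ∉ A ⊓ B →
      ∀ c : G, c ∈ A ⊓ B → a * c * a⁻¹ ∈ A ⊓ B → c = 1)
    (T : SimpleGraph ((G ⧸ A) ⊕ (G ⧸ B)))
    (hadj : ∀ x y : (G ⧸ A) ⊕ (G ⧸ B), T.Adj x y ↔
      ∃ g : G, (x = Sum.inl (QuotientGroup.mk g) ∧ y = Sum.inr (QuotientGroup.mk g)) ∨
               (y = Sum.inl (QuotientGroup.mk g) ∧ x = Sum.inr (QuotientGroup.mk g)))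
    (htree : T.IsTree)
    (v : Fin 4 → (G ⧸ A) ⊕ (G ⧸ B))
    (hpath : ∀ i : Fin 3, T.Adj (v i.castSucc) (v i.succ))
    (hinj : Function.Injective v)
    (k : G)
    (hfix : ∀ i : Fin 4,
      Sum.map (fun x : G ⧸ A => k • x) (fun y : G ⧸ B => k • y) (v i) = v i) :
    k = 1 :=
  stmt_17_general A B hmal T hadj v hpath hinj k hfix
end

section
/- Let G be a finitely generated group acting on a tree T with finitely many orbits of edges. If v is a vertex of T such that the stabilizer of every edge adjacent to v is finitely generated, then the stabilizer G_v of v is finitely generated. -/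
/-
Let `S` be a finite monoid generating set of `G` and `Z` the union of the geodesics `[v, s • v]`,
`s ∈ S`. Passing from `g` to `g * s` moves `g • v` along `g • [v, s • v]`, which meets `v` at most
once. Choose for each point of `Z` in the orbit of `v` an element `γ` carrying it to `v`, and let
`D` be the finitely many `γ`-translates of points of `Z` that are neighbours of `v`. Induction on
words then shows that every `g ∈ G_v` lies in the subgroup `K` generated by the elements `γ * s`
fixing `v` and by the elements of `G_v` carrying a point of `D` into `D`: away from `v` the
invariant is that the geodesic from `v` to `g • v` leaves `v` through a `K`-translate of a point
of `D`. The second set of generators only contributes the edge stabilizers `G_v ∩ G_w`, `w ∈ D`,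
and one element for each pair of points of `D`, so `K` is finitely generated.
-/

open SimpleGraph MulAction Pointwise

namespace SimpleGraph.IsTree

variable {V : Type*} {T : SimpleGraph V} (hT : T.IsTree)

noncomputable def geodesic (u w : V) : T.Walk u w := (hT.existsUnique_path u w).exists.choose

lemma isPath_geodesic (u w : V) : (hT.geodesic u w).IsPath :=
  (hT.existsUnique_path u w).exists.choose_spec

lemma eq_geodesic {u w : V} {p : T.Walk u w} (hp : p.IsPath) : p = hT.geodesic u w :=
  (hT.existsUnique_path u w).unique hp (hT.isPath_geodesic u w)

/-- The neighbour of `u` on the geodesic from `u` to `w`; junk value `u` when `w = u`. -/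
noncomputable def firstStep (u w : V) : V := (hT.geodesic u w).snd

lemma firstStep_eq_snd {u w : V} {p : T.Walk u w} (hp : p.IsPath) : hT.firstStep u w = p.snd := by
  rw [hT.eq_geodesic hp, firstStep]

lemma adj_firstStep {u w : V} (h : u ≠ w) : T.Adj u (hT.firstStep u w) :=
  Walk.adj_snd (Walk.not_nil_of_ne h)

lemma firstStep_eq_of_adj {v x y : V} (hxy : T.Adj x y) (hx : x ≠ v) (hy : y ≠ v) :
    hT.firstStep v x = hT.firstStep v y := by
  classical
  -- either `y` lies on the geodesic from `v` to `x`, or that geodesic followed by `xy` is one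
  set P := hT.geodesic v x
  have hP : P.IsPath := hT.isPath_geodesic v x
  by_cases hyP : y ∈ P.support
  · rw [hT.firstStep_eq_snd (hP.takeUntil hyP), Walk.snd_takeUntil hy, firstStep]
  · rw [hT.firstStep_eq_snd (hP.concat hyP hxy), Walk.concat_eq_append]
    exact ((Walk.getVert_append' _ _ 1).trans
      (if_pos (Walk.not_nil_iff_lt_length.1 (Walk.not_nil_of_ne hx.symm)))).symm

lemma firstStep_eq_of_walk {v x y : V} (W : T.Walk x y) (hv : v ∉ W.support) :
    hT.firstStep v x = hT.firstStep v y := by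
  induction W with
  | nil => rfl
  | cons hadj W ih =>
    simp only [Walk.support_cons, List.mem_cons, not_or] at hv
    exact (hT.firstStep_eq_of_adj hadj (Ne.symm hv.1)
      fun h => hv.2 (h ▸ W.start_mem_support)).trans (ih hv.2)

lemma firstStep_map (φ : T →g T) (hφ : Function.Injective φ) (u w : V) :
    hT.firstStep (φ u) (φ w) = φ (hT.firstStep u w) := by
  rw [hT.firstStep_eq_snd ((hT.isPath_geodesic u w).map hφ)]
  exact Walk.getVert_map _ _ 1

lemma firstStep_mem_support_right {a b z : V} {p : T.Walk a b} (hp : p.IsPath)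
    (hz : z ∈ p.support) : hT.firstStep z b ∈ p.support := by
  classical
  rw [hT.firstStep_eq_snd (hp.dropUntil hz)]
  exact p.support_dropUntil_subset_support hz (Walk.getVert_mem_support _ 1)

lemma firstStep_mem_support_left {a b z : V} {p : T.Walk a b} (hp : p.IsPath)
    (hz : z ∈ p.support) : hT.firstStep z a ∈ p.support := by
  classical
  rw [hT.firstStep_eq_snd (hp.takeUntil hz).reverse]
  have := Walk.getVert_mem_support (p.takeUntil z hz).reverse 1
  rw [Walk.support_reverse, List.mem_reverse] at this
  exact p.support_takeUntil_subset_support hz this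

end SimpleGraph.IsTree

section GroupAction

variable {G α : Type*} [Group G] [MulAction G α]

theorem Subgroup.fg_closure_of_fg_inf_stabilizer (H : Subgroup G) {D : Set α} (hD : D.Finite)
    (hfg : ∀ w ∈ D, (H ⊓ stabilizer G w).FG) :
    (Subgroup.closure {h | h ∈ H ∧ ∃ x ∈ D, h • x ∈ D}).FG := by
  set E := {h | h ∈ H ∧ ∃ x ∈ D, h • x ∈ D}
  have : ∀ p : α × α, ∃ t : G, (∃ h ∈ H, h • p.1 = p.2) → t ∈ H ∧ t • p.1 = p.2 := fun p => by
    by_cases hp : ∃ h ∈ H, h • p.1 = p.2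
    · obtain ⟨t, ht, htp⟩ := hp
      exact ⟨t, fun _ => ⟨ht, htp⟩⟩
    · exact ⟨1, fun h => absurd h hp⟩
  choose t ht using this
  choose C hC hCfin using fun w (hw : w ∈ D) => (H ⊓ stabilizer G w).fg_iff.1 (hfg w hw)
  set F := (t '' D ×ˢ D ∩ E) ∪ ⋃ (w) (hw : w ∈ D), C w hw
  have hFE : F ⊆ E := by
    rintro f (hf | hf)
    · exact hf.2
    · obtain ⟨w, hw, hfw⟩ := Set.mem_iUnion₂.1 hf
      have hf' : f ∈ H ⊓ stabilizer G w := hC w hw ▸ Subgroup.subset_closure hfw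
      exact ⟨hf'.1, w, hw, (mem_stabilizer_iff.1 hf'.2).symm ▸ hw⟩
  have hEF : E ⊆ Subgroup.closure F := by
    rintro h ⟨hH, x, hx, hxD⟩
    obtain ⟨htH, htx⟩ := ht (x, h • x) ⟨h, hH, rfl⟩
    have htF : t (x, h • x) ∈ F :=
      Or.inl ⟨⟨(x, h • x), ⟨hx, hxD⟩, rfl⟩, htH, x, hx, htx ▸ hxD⟩
    have hstab : h * (t (x, h • x))⁻¹ ∈ H ⊓ stabilizer G (h • x) :=
      Subgroup.mem_inf.2 ⟨mul_mem hH (inv_mem htH),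
        by simp [mem_stabilizer_iff, mul_smul, inv_smul_eq_iff, htx]⟩
    rw [← hC _ hxD] at hstab
    have hCF : Subgroup.closure (C _ hxD) ≤ Subgroup.closure F :=
      Subgroup.closure_mono (Set.subset_union_of_subset_right
        (Set.subset_iUnion₂ (s := fun w hw => C w hw) _ hxD) _)
    simpa using mul_mem (hCF hstab) (Subgroup.subset_closure htF)
  refine (Subgroup.fg_iff _).2 ⟨F, le_antisymm ?_ ?_, ?_⟩
  · exact Subgroup.closure_le _ |>.2 (hFE.trans Subgroup.subset_closure)
  · exact Subgroup.closure_le _ |>.2 hEF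
  · exact (((hD.prod hD).image t).subset Set.inter_subset_left).union
      (hD.biUnion' fun w hw => hCfin w hw)

lemma MulAction.exists_finite_smul_eq (G : Type*) [Group G] [MulAction G α] {Z : Set α} (hZ : Z.Finite)
    (v : α) : ∃ Γ : Set G, Γ.Finite ∧ 1 ∈ Γ ∧ ∀ z ∈ Z, z ∈ orbit G v → ∃ γ ∈ Γ, γ • z = v := by
  have : ∀ z : α, ∃ γ : G, z ∈ orbit G v → γ • z = v := fun z => by
    by_cases hz : z ∈ orbit G v
    · obtain ⟨g, rfl⟩ := hz
      exact ⟨g⁻¹, fun _ => inv_smul_smul g v⟩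
    · exact ⟨1, fun h => absurd h hz⟩
  choose γ hγ using this
  exact ⟨insert 1 (γ '' Z), (hZ.image γ).insert 1, Set.mem_insert 1 _,
    fun z hz hzv => ⟨γ z, Set.mem_insert_of_mem 1 ⟨z, hz, rfl⟩, hγ z hzv⟩⟩

end GroupAction

namespace SimpleGraph

variable {V : Type*}

abbrev ActsByHoms (G : Type*) [Group G] [MulAction G V] (T : SimpleGraph V) : Prop :=
  ∀ (g : G) (u w : V), T.Adj u w → T.Adj (g • u) (g • w)

variable {G : Type*} [Group G] [MulAction G V] {T : SimpleGraph V}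

def smulHom (hact : T.ActsByHoms G) (g : G) : T →g T :=
  ⟨(g • ·), hact g _ _⟩

namespace IsTree

variable (hT : T.IsTree) (v : V) (K : Subgroup G) (D : Set V)

lemma firstStep_smul (hact : T.ActsByHoms G) (g : G) (u w : V) :
    hT.firstStep (g • u) (g • w) = g • hT.firstStep u w :=
  hT.firstStep_map (smulHom hact g) (MulAction.injective g) u w

def Controlled (g : G) : Prop :=
  (g • v = v → g ∈ K) ∧ (g • v ≠ v → hT.firstStep v (g • v) ∈ (K : Set G) • D)

variable {hT v K D}

lemma controlled_one : hT.Controlled v K D 1 :=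
  ⟨fun _ => K.one_mem, fun h => absurd (one_smul G v) h⟩

lemma controlled_mul_of_notMem_support (hact : T.ActsByHoms G) {g s : G}
    (hg : hT.Controlled v K D g) (hs : g⁻¹ • v ∉ (hT.geodesic v (s • v)).support) :
    hT.Controlled v K D (g * s) := by
  have hgv : g • v ≠ v := fun h => hs (by
    rw [inv_smul_eq_iff.2 h.symm]; exact Walk.start_mem_support _)
  have hgsv : (g * s) • v ≠ v := fun h => hs (by
    rw [inv_smul_eq_iff.2 (h.symm.trans (mul_smul g s v))]; exact Walk.end_mem_support _)
  have hwalk : v ∉ ((hT.geodesic v (s • v)).map (smulHom hact g)).support := by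
    rw [Walk.support_map, List.mem_map]
    rintro ⟨x, hx, hxv⟩
    exact hs (eq_inv_smul_iff.2 hxv ▸ hx)
  refine ⟨fun h => absurd h hgsv, fun _ => ?_⟩
  rw [mul_smul, ← (hT.firstStep_eq_of_walk _ hwalk :
    hT.firstStep v (g • v) = hT.firstStep v (g • s • v))]
  exact hg.2 hgv

variable {Z : Set V} {Γ : Set G}

lemma exists_mul_inv_mem_of_mem_support (hact : T.ActsByHoms G) (hK : K ≤ stabilizer G v)
    {g s : G} (hZ : ∀ z ∈ (hT.geodesic v (s • v)).support, z ∈ Z) (hΓ1 : 1 ∈ Γ)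
    (hΓ : ∀ z ∈ Z, z ∈ orbit G v → ∃ γ ∈ Γ, γ • z = v)
    (hD : ∀ γ ∈ Γ, ∀ z ∈ Z, T.Adj v (γ • z) → γ • z ∈ D)
    (hKD : ∀ h ∈ stabilizer G v, ∀ x ∈ D, h • x ∈ D → h ∈ K)
    (hg : hT.Controlled v K D g) (hz : g⁻¹ • v ∈ (hT.geodesic v (s • v)).support) :
    ∃ γ ∈ Γ, γ • g⁻¹ • v = v ∧ g * γ⁻¹ ∈ K := by
  by_cases hgv : g • v = v
  · exact ⟨1, hΓ1, by rw [one_smul, inv_smul_eq_iff, hgv], by simpa using hg.1 hgv⟩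
  set z := g⁻¹ • v
  have hzv : z ≠ v := fun h => hgv (inv_smul_eq_iff.1 h).symm
  obtain ⟨γ, hγΓ, hγz⟩ := hΓ z (hZ z hz) (mem_orbit v g⁻¹)
  refine ⟨γ, hγΓ, hγz, ?_⟩
  set c := hT.firstStep z v
  have hcZ : c ∈ Z := hZ c (hT.firstStep_mem_support_left (hT.isPath_geodesic _ _) hz)
  have hγc : γ • c ∈ D := hD γ hγΓ c hcZ (hγz ▸ hact γ _ _ (hT.adj_firstStep hzv))
  obtain ⟨k, hk, x, hx, hkx⟩ := Set.mem_smul.1 (hg.2 hgv)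
  -- `g` carries the geodesic `[z, v]` onto `[v, g • v]`
  have hgc : g • c = k • x := by rw [hkx, ← hT.firstStep_smul hact, smul_inv_smul]
  have hγv : γ⁻¹ • v = z := inv_smul_eq_iff.2 hγz.symm
  have hkv : k⁻¹ • v = v := inv_smul_eq_iff.2 (hK hk).symm
  have hη : k⁻¹ * (g * γ⁻¹) ∈ K := by
    refine hKD _ ?_ (γ • c) hγc ?_
    · rw [mem_stabilizer_iff, mul_smul, mul_smul, hγv, smul_inv_smul, hkv]
    · rwa [mul_smul, mul_smul, inv_smul_smul, hgc, inv_smul_smul]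
  simpa using mul_mem hk hη

lemma controlled_mul_of_mem_support (hact : T.ActsByHoms G) (hK : K ≤ stabilizer G v)
    {g s : G} (hZ : ∀ z ∈ (hT.geodesic v (s • v)).support, z ∈ Z) (hΓ1 : 1 ∈ Γ)
    (hΓ : ∀ z ∈ Z, z ∈ orbit G v → ∃ γ ∈ Γ, γ • z = v)
    (hD : ∀ γ ∈ Γ, ∀ z ∈ Z, T.Adj v (γ • z) → γ • z ∈ D)
    (hKD : ∀ h ∈ stabilizer G v, ∀ x ∈ D, h • x ∈ D → h ∈ K)
    (hKΓ : ∀ γ ∈ Γ, (γ * s) • v = v → γ * s ∈ K)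
    (hg : hT.Controlled v K D g) (hz : g⁻¹ • v ∈ (hT.geodesic v (s • v)).support) :
    hT.Controlled v K D (g * s) := by
  obtain ⟨γ, hγΓ, hγz, hk⟩ :=
    exists_mul_inv_mem_of_mem_support hact hK hZ hΓ1 hΓ hD hKD hg hz
  have hgs : g * s = g * γ⁻¹ * (γ * s) := by group
  have hfix : (g * s) • v = v ↔ (γ * s) • v = v := by
    rw [hgs, mul_smul, smul_eq_iff_eq_inv_smul, inv_smul_eq_iff.2 (hK hk).symm]
  refine ⟨fun h => hgs ▸ mul_mem hk (hKΓ γ hγΓ (hfix.1 h)), fun h => ?_⟩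
  set z := g⁻¹ • v
  have hzs : z ≠ s • v := fun h' => mt hfix.2 h (by rw [mul_smul, ← h', hγz])
  set y := hT.firstStep z (s • v)
  have hyZ : y ∈ Z := hZ y (hT.firstStep_mem_support_right (hT.isPath_geodesic _ _) hz)
  have hγy : γ • y ∈ D := hD γ hγΓ y hyZ (hγz ▸ hact γ _ _ (hT.adj_firstStep hzs))
  refine Set.mem_smul.2 ⟨g * γ⁻¹, hk, γ • y, hγy, ?_⟩
  calc (g * γ⁻¹) • γ • y = g • y := by rw [smul_smul, inv_mul_cancel_right]
    _ = hT.firstStep (g • z) (g • s • v) := (hT.firstStep_smul hact g z (s • v)).symm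
    _ = hT.firstStep v ((g * s) • v) := by rw [smul_inv_smul, mul_smul]

theorem stabilizer_le (hact : T.ActsByHoms G) (hK : K ≤ stabilizer G v) {S : Set G}
    (hS : Submonoid.closure S = ⊤) (hZ : ∀ s ∈ S, ∀ z ∈ (hT.geodesic v (s • v)).support, z ∈ Z)
    (hΓ1 : 1 ∈ Γ) (hΓ : ∀ z ∈ Z, z ∈ orbit G v → ∃ γ ∈ Γ, γ • z = v)
    (hD : ∀ γ ∈ Γ, ∀ z ∈ Z, T.Adj v (γ • z) → γ • z ∈ D)
    (hKD : ∀ h ∈ stabilizer G v, ∀ x ∈ D, h • x ∈ D → h ∈ K)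
    (hKΓS : ∀ γ ∈ Γ, ∀ s ∈ S, (γ * s) • v = v → γ * s ∈ K) :
    stabilizer G v ≤ K := by
  intro g hgv
  suffices hT.Controlled v K D g from this.1 hgv
  clear hgv
  induction (hS ▸ Submonoid.mem_top g : g ∈ Submonoid.closure S)
    using Submonoid.closure_induction_right with
  | one => exact controlled_one
  | mul_right g _ s hs ih =>
    by_cases hz : g⁻¹ • v ∈ (hT.geodesic v (s • v)).support
    · exact controlled_mul_of_mem_support hact hK (hZ s hs) hΓ1 hΓ hD hKD
        (fun γ hγ => hKΓS γ hγ s hs) ih hz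
    · exact controlled_mul_of_notMem_support hact ih hz

end IsTree

end SimpleGraph

theorem stmt_18_general {G V : Type*} [Group G] [MulAction G V]
    (T : SimpleGraph V) (htree : T.IsTree)
    (hact : ∀ (g : G) (u w : V), T.Adj u w → T.Adj (g • u) (g • w))
    (hfgG : Group.FG G)
    (v : V)
    (hedge : ∀ w : V, T.Adj v w →
      (MulAction.stabilizer G v ⊓ MulAction.stabilizer G w).FG) :
    (MulAction.stabilizer G v).FG := by
  obtain ⟨S, hS, hSfin⟩ := Monoid.fg_iff.1 (Group.fg_iff_monoid_fg.1 hfgG)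
  set Z : Set V := ⋃ s ∈ S, {z | z ∈ (htree.geodesic v (s • v)).support}
  have hZfin : Z.Finite :=
    hSfin.biUnion fun s _ => (htree.geodesic v (s • v)).support.finite_toSet
  obtain ⟨Γ, hΓfin, hΓ1, hΓ⟩ := MulAction.exists_finite_smul_eq G hZfin v
  set D := {w | T.Adj v w} ∩ Γ • Z
  set F := {a ∈ Γ * S | a • v = v}
  set E := {h | h ∈ stabilizer G v ∧ ∃ x ∈ D, h • x ∈ D}
  have hK : Subgroup.closure (F ∪ E) ≤ stabilizer G v :=
    (Subgroup.closure_le _).2 (Set.union_subset (fun _ ha => ha.2) fun _ hh => hh.1)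
  have hstab : stabilizer G v = Subgroup.closure (F ∪ E) :=
    le_antisymm (htree.stabilizer_le hact hK hS (fun _ hs _ hz => Set.mem_biUnion hs hz)
      hΓ1 hΓ (fun _ hγ _ hz hadj => Set.mem_inter hadj (Set.smul_mem_smul hγ hz))
      (fun _ hh _ hx hhx => Subgroup.subset_closure (Or.inr ⟨hh, _, hx, hhx⟩))
      fun _ hγ _ hs hfix => Subgroup.subset_closure (Or.inl ⟨Set.mul_mem_mul hγ hs, hfix⟩)) hK
  rw [hstab, Subgroup.closure_union]
  exact ((Subgroup.fg_iff _).2 ⟨F, rfl, (hΓfin.mul hSfin).subset (Set.sep_subset _ _)⟩).sup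
    (Subgroup.fg_closure_of_fg_inf_stabilizer _ ((hΓfin.smul hZfin).subset Set.inter_subset_right)
      fun w hw => hedge w hw.1)

/-- if a finitely generated group acts on a tree with finitely
many orbits of edges and the stabilizer of every edge adjacent to `v` is
finitely generated, then the stabilizer of `v` is finitely generated. -/
theorem stmt_18 {G V : Type*} [Group G] [MulAction G V]
    (T : SimpleGraph V) (htree : T.IsTree)
    (hact : ∀ (g : G) (u w : V), T.Adj u w → T.Adj (g • u) (g • w))
    (hfgG : Group.FG G)
    (E0 : Finset (V × V))
    (hcofin : ∀ u w : V, T.Adj u w → ∃ p ∈ E0, ∃ g : G, g • p.1 = u ∧ g • p.2 = w)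
    (v : V)
    (hedge : ∀ w : V, T.Adj v w →
      (MulAction.stabilizer G v ⊓ MulAction.stabilizer G w).FG) :
    (MulAction.stabilizer G v).FG :=
  stmt_18_general T htree hact hfgG v hedge
end
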